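/- If λ is an (s,s+1)-core partition with d-distinct parts of largest size, then β(λ) = {s−1, s−(d+2), s−(2d+3), ..., s−((k−1)d+k)} for some integer k ≥ 0, i.e., β(λ) consists of an arithmetic progression with common difference d+2 starting at s−1. -/

import Mathlib

open Finset

/-- `lam` gives the parts of a partition with `l` parts, 1-indexed:
positive parts which are nonincreasing. -/
def IsPartition (lam : ℕ → ℕ) (l : ℕ) : Prop :=
  (∀ i, 1 ≤ i → i ≤ l → 0 < lam i) ∧ ∀ i, 1 ≤ i → i < l → lam (i + 1) ≤ lam i

/-- Hook length of the box `(i,j)` of the Young diagram: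
arm (boxes to the right) + leg (boxes below) + 1. -/
def hookLen (lam : ℕ → ℕ) (l i j : ℕ) : ℕ :=
  (lam i - j) + ((Finset.Ioc i l).filter fun r => j ≤ lam r).card + 1

/-- The β-set: the set of first-column hook lengths `λ_i + l - i`. -/
def betaSet (lam : ℕ → ℕ) (l : ℕ) : Finset ℕ :=
  (Finset.Icc 1 l).image fun i => lam i + l - i

/-- `λ` is an `s`-core: no box of the Young diagram has hook length `s`. -/
def IsCore (lam : ℕ → ℕ) (l s : ℕ) : Prop :=
  ∀ i ∈ Finset.Icc 1 l, ∀ j ∈ Finset.Icc 1 (lam i), hookLen lam l i j ≠ s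

/-- `λ` has `d`-distinct parts: consecutive parts differ by at least `d`. -/
def DDistinct (lam : ℕ → ℕ) (l d : ℕ) : Prop :=
  ∀ i, 1 ≤ i → i < l → lam (i + 1) + d ≤ lam i

/-- `X` is a `d`-th order twin-free set. -/
def TwinFree (d : ℕ) (X : Finset ℕ) : Prop :=
  ∀ x ∈ X, ∀ k, 1 ≤ k → k ≤ d → x + k ∉ X

open Classical in
/-- Number of `d`-th order twin-free subsets of `{1, 2, ..., s-1}`. -/
noncomputable def numTwinFree (d s : ℕ) : ℕ :=
  ((Finset.Icc 1 (s - 1)).powerset.filter fun X => TwinFree d X).card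

/-!
For `d ≥ 1` the parts are distinct, so along the first row of an `(s, s + 1)`-core the hook
lengths fall from `λ₁ + l - 1` to `1` in steps of at most two; since none of them is `s` or
`s + 1`, already `λ₁ + l - 1 < s`. With `λᵢ + (i - 1) d ≤ λ₁` this bounds the `i`-th β-number
`λᵢ + l - i` by `s - 1 - (i - 1)(d + 1)`. Raising every β-number to this bound gives a
`d`-distinct partition with all hooks below `s`, hence again an `(s, s + 1)`-core, which
dominates `λ` part by part; maximality of `|λ|` forces equality.
-/

namespace DDistinct

variable {lam : ℕ → ℕ} {l d : ℕ}

theorem add_mul_le (h : DDistinct lam l d) {i : ℕ} (hi : 1 ≤ i) :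
    ∀ n, i + n ≤ l → lam (i + n) + n * d ≤ lam i
  | 0, _ => by simp
  | n + 1, hn => by
    have hstep := h (i + n) (by omega) (by omega)
    have ih := h.add_mul_le hi n (by omega)
    rw [← add_assoc, add_one_mul]
    omega

theorem strictAntiOn (h : DDistinct lam l d) (hd : 0 < d) :
    StrictAntiOn lam (Set.Icc 1 l) := by
  intro a ha b hb hab
  obtain ⟨n, rfl⟩ := Nat.exists_eq_add_of_le hab.le
  have := h.add_mul_le ha.1 n hb.2
  have : 0 < n * d := Nat.mul_pos (by omega) hd
  omega

end DDistinct

section Hooks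

variable {lam : ℕ → ℕ} {l i : ℕ}

theorem hookLen_le_hookLen_succ_add_two (hinj : Set.InjOn lam (Set.Ioc i l)) (j : ℕ) :
    hookLen lam l i j ≤ hookLen lam l i (j + 1) + 2 := by
  have hsplit : (Finset.Ioc i l).filter (fun r => j ≤ lam r) ⊆
      (Finset.Ioc i l).filter (fun r => j + 1 ≤ lam r) ∪
        (Finset.Ioc i l).filter (fun r => lam r = j) := by
    intro r hr
    rw [Finset.mem_filter] at hr
    rw [Finset.mem_union, Finset.mem_filter, Finset.mem_filter]
    rcases hr.2.lt_or_eq with hlt | heq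
    exacts [Or.inl ⟨hr.1, hlt⟩, Or.inr ⟨hr.1, heq.symm⟩]
  have hone : ((Finset.Ioc i l).filter fun r => lam r = j).card ≤ 1 :=
    Finset.card_le_one.mpr fun a ha b hb => by
      simp only [Finset.mem_filter] at ha hb
      exact hinj (Finset.mem_Ioc.1 ha.1) (Finset.mem_Ioc.1 hb.1) (ha.2.trans hb.2.symm)
  have := (Finset.card_le_card hsplit).trans (Finset.card_union_le _ _)
  unfold hookLen
  omega

theorem hookLen_one (hpos : ∀ r ∈ Finset.Ioc i l, 0 < lam r) :
    hookLen lam l i 1 = lam i - 1 + (l - i) + 1 := by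
  rw [hookLen, Finset.filter_true_of_mem (p := fun r => 1 ≤ lam r) hpos, Nat.card_Ioc]

theorem hookLen_self (hlt : ∀ r ∈ Finset.Ioc i l, lam r < lam i) :
    hookLen lam l i (lam i) = 1 := by
  rw [hookLen, Finset.filter_false_of_mem fun r hr => not_le.mpr (hlt r hr)]
  simp

theorem hookLen_le {j : ℕ} (hj : j ∈ Finset.Icc 1 (lam i)) :
    hookLen lam l i j ≤ lam i + (l - i) := by
  have := (Finset.card_filter_le (Finset.Ioc i l) fun r => j ≤ lam r).trans_eq
    (Nat.card_Ioc i l)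
  rw [Finset.mem_Icc] at hj
  unfold hookLen
  omega

theorem isCore_of_forall_lt {t : ℕ} (h : ∀ i ∈ Finset.Icc 1 l, lam i + (l - i) < t) :
    IsCore lam l t :=
  fun i hi _ hj => ((hookLen_le hj).trans_lt (h i hi)).ne

end Hooks

theorem exists_eq_or_eq_succ_of_le_add_two {f : ℕ → ℕ} (hf : ∀ j, f j ≤ f (j + 1) + 2)
    {s a b : ℕ} (hab : a ≤ b) (ha : s ≤ f a) (hb : f b ≤ s) :
    ∃ j ∈ Finset.Icc a b, f j = s ∨ f j = s + 1 := by
  obtain ⟨n, rfl⟩ := Nat.exists_eq_add_of_le hab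
  induction n generalizing a with
  | zero => exact ⟨a, by simp, by rw [add_zero] at hb; omega⟩
  | succ n ih =>
    by_cases hfa : f a ≤ s + 1
    · exact ⟨a, by simp, by omega⟩
    · have hstep := hf a
      obtain ⟨j, hj, hfj⟩ := ih (a := a + 1) (by omega) (by omega)
        (by rwa [show a + 1 + n = a + (n + 1) by omega])
      exact ⟨j, by simp only [Finset.mem_Icc] at hj ⊢; omega, hfj⟩

section Core

variable {lam : ℕ → ℕ} {l s d : ℕ}

theorem add_sub_one_lt_of_isCore (hs : 0 < s) (hd : 0 < d) (h : IsPartition lam l)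
    (h1 : IsCore lam l s) (h2 : IsCore lam l (s + 1)) (h3 : DDistinct lam l d) (hl : 0 < l) :
    lam 1 + (l - 1) < s := by
  have hanti := h3.strictAntiOn hd
  have h1l : 1 ∈ Finset.Icc 1 l := Finset.mem_Icc.2 ⟨le_rfl, hl⟩
  have hpos : ∀ r ∈ Finset.Ioc 1 l, 0 < lam r := fun r hr =>
    h.1 r (Finset.mem_Ioc.1 hr).1.le (Finset.mem_Ioc.1 hr).2
  have hlt : ∀ r ∈ Finset.Ioc 1 l, lam r < lam 1 := fun r hr =>
    hanti ⟨le_rfl, hl⟩ (Set.Ioc_subset_Icc_self (Finset.mem_Ioc.1 hr)) (Finset.mem_Ioc.1 hr).1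
  by_contra! hge
  obtain ⟨j, hj, hjs⟩ := exists_eq_or_eq_succ_of_le_add_two (s := s)
    (hookLen_le_hookLen_succ_add_two (hanti.injOn.mono Set.Ioc_subset_Icc_self))
    (h.1 1 le_rfl hl) (by rw [hookLen_one hpos]; omega) (by rw [hookLen_self hlt]; exact hs)
  rcases hjs with hjs | hjs
  exacts [h1 1 h1l j hj hjs, h2 1 h1l j hj hjs]

theorem beta_add_mul_lt (hs : 0 < s) (hd : 0 < d) (h : IsPartition lam l)
    (h1 : IsCore lam l s) (h2 : IsCore lam l (s + 1)) (h3 : DDistinct lam l d) :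
    ∀ i ∈ Finset.Icc 1 l, lam i + (l - i) + (i - 1) * (d + 1) < s := by
  intro i hi
  rw [Finset.mem_Icc] at hi
  have hfirst := add_sub_one_lt_of_isCore hs hd h h1 h2 h3 (by omega)
  have hchain := h3.add_mul_le le_rfl (i - 1) (by omega)
  rw [show 1 + (i - 1) = i by omega] at hchain
  rw [mul_add_one]
  omega

end Core

/-- Parts chosen so that the `i`-th β-number `λᵢ + l - i` is `s - 1 - (i - 1) * (d + 1)`. -/
def apPartition (s d l : ℕ) (i : ℕ) : ℕ :=
  s - 1 - (i - 1) * (d + 1) - (l - i)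

namespace apPartition

variable {s d l : ℕ} (hpos : ∀ i ∈ Finset.Icc 1 l, 0 < apPartition s d l i)
include hpos

theorem add_sub {i : ℕ} (hi : i ∈ Finset.Icc 1 l) :
    apPartition s d l i + (l - i) = s - 1 - (i - 1) * (d + 1) := by
  have := hpos i hi
  unfold apPartition at *
  omega

theorem dDistinct : DDistinct (apPartition s d l) l d := by
  intro i hi hil
  have h₁ := add_sub hpos (i := i) (Finset.mem_Icc.2 ⟨hi, hil.le⟩)
  have h₂ := add_sub hpos (i := i + 1) (Finset.mem_Icc.2 ⟨by omega, hil⟩)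
  have h₃ := hpos (i + 1) (Finset.mem_Icc.2 ⟨by omega, hil⟩)
  have hmul : (i + 1 - 1) * (d + 1) = (i - 1) * (d + 1) + (d + 1) := by
    rw [Nat.add_sub_cancel, ← add_one_mul, Nat.sub_add_cancel hi]
  omega

theorem isPartition : IsPartition (apPartition s d l) l :=
  ⟨fun i hi hil => hpos i (by simp [hi, hil]),
    fun i hi hil => (Nat.le_add_right _ _).trans (dDistinct hpos i hi hil)⟩

theorem isCore {t : ℕ} (ht : s ≤ t) : IsCore (apPartition s d l) l t :=
  isCore_of_forall_lt fun i hi => by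
    have := add_sub hpos hi
    have := hpos i hi
    omega

theorem betaSet_eq :
    betaSet (apPartition s d l) l = (Finset.range l).image fun j => s - 1 - j * (d + 1) := by
  have hshift : Finset.Icc 1 l = (Finset.range l).image (· + 1) := by
    ext i
    simp only [Finset.mem_Icc, Finset.mem_image, Finset.mem_range]
    exact ⟨fun hi => ⟨i - 1, by omega, by omega⟩, by rintro ⟨j, hj, rfl⟩; omega⟩
  rw [betaSet, hshift, Finset.image_image]
  refine Finset.image_congr fun j hj => ?_
  have hjl := Finset.mem_range.1 hj
  have := add_sub hpos (i := j + 1) (Finset.mem_Icc.2 ⟨by omega, hjl⟩)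
  rw [Nat.add_sub_cancel] at this
  change apPartition s d l (j + 1) + l - (j + 1) = s - 1 - j * (d + 1)
  omega

end apPartition

/-- If `λ` is an `(s,s+1)`-core partition with `d`-distinct parts of largest
size, then `β(λ) = {s-1, s-(d+2), ..., s-((k-1)d+k)}` for some `k ≥ 0`. -/
theorem stmt15 (lam : ℕ → ℕ) (l s d : ℕ) (hs : 0 < s) (hd : 0 < d)
    (h : IsPartition lam l) (h1 : IsCore lam l s) (h2 : IsCore lam l (s + 1))
    (h3 : DDistinct lam l d)
    (hmax : ∀ lam' l', IsPartition lam' l' → IsCore lam' l' s →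
      IsCore lam' l' (s + 1) → DDistinct lam' l' d →
      ∑ i ∈ Finset.Icc 1 l', lam' i ≤ ∑ i ∈ Finset.Icc 1 l, lam i) :
    ∃ k : ℕ, betaSet lam l = (Finset.range k).image fun j => s - 1 - j * (d + 1) := by
  have hβ := beta_add_mul_lt hs hd h h1 h2 h3
  have hle : ∀ i ∈ Finset.Icc 1 l, lam i ≤ apPartition s d l i := fun i hi => by
    have := hβ i hi
    unfold apPartition
    omega
  have hpos : ∀ i ∈ Finset.Icc 1 l, 0 < apPartition s d l i := fun i hi =>
    (h.1 i (Finset.mem_Icc.1 hi).1 (Finset.mem_Icc.1 hi).2).trans_le (hle i hi)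
  have heq : ∀ i ∈ Finset.Icc 1 l, lam i = apPartition s d l i :=
    (Finset.sum_eq_sum_iff_of_le hle).1 <| (Finset.sum_le_sum hle).antisymm <|
      hmax _ _ (apPartition.isPartition hpos) (apPartition.isCore hpos le_rfl)
        (apPartition.isCore hpos (Nat.le_succ s)) (apPartition.dDistinct hpos)
  refine ⟨l, ?_⟩
  rw [← apPartition.betaSet_eq hpos, betaSet, betaSet]
  exact Finset.image_congr fun i hi => by rw [heq i hi]
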